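/- arXiv:1304.4805 — 2 statements merged into one kernel-verified Lean document; each statement's English description precedes it below -/
import Mathlib

section
/- Let R = ℂ⟦x,y⟧ (formal power series in two variables), let I ⊆ R be a proper ideal, and let P_1, …, P_M be monomials such that P_1 = 1, each P_{m+1} equals x·P_m or y·P_m, and P_m ∉ I for all m. Then the images of P_1, …, P_M in R/I are linearly independent over ℂ; in particular dim_ℂ R/I ≥ M. -/
/-!
Each monomial `P_n` with `n > m` is `q * P_m` for some `q` in the maximal ideal `𝔪 = (x, y)`.
So if `∑ c_n P_n ∈ I` and `m` is the least index with `c_m ≠ 0`, the sum factors as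
`(c_m + q) * P_m` with `c_m + q` a unit of the local ring, forcing `P_m ∈ I`.
-/

open MvPowerSeries IsLocalRing Ideal

section

variable {k R : Type*} [Field k] [CommRing R] [IsLocalRing R] [Algebra k R]

theorem IsUnit.add_of_mem_maximalIdeal {a b : R} (ha : IsUnit a) (hb : b ∈ maximalIdeal R) :
    IsUnit (a + b) := by
  by_contra h
  have : a ∈ maximalIdeal R := by
    simpa using sub_mem ((mem_maximalIdeal _).2 h) hb
  exact (mem_maximalIdeal a).1 this ha

theorem mem_maximalIdeal_mul_span_singleton_of_lt {M : ℕ} {P : ℕ → R}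
    (hstep : ∀ m, m + 1 < M → P (m + 1) ∈ maximalIdeal R * span {P m})
    {m n : ℕ} (hmn : m < n) (hn : n < M) : P n ∈ maximalIdeal R * span {P m} := by
  induction n, hmn using Nat.le_induction with
  | base => exact hstep m hn
  | succ n hmn ih =>
    have hspan : span {P n} ≤ span {P m} :=
      (span_singleton_le_iff_mem _).2 (mul_le_right (ih (by omega)))
    exact mul_mono_right hspan (hstep n hn)

theorem exists_isUnit_sum_smul_eq_mul {M : ℕ} {P : ℕ → R}
    (hstep : ∀ m, m + 1 < M → P (m + 1) ∈ maximalIdeal R * span {P m})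
    (g : Fin M → k) (m₀ : Fin M) (hg₀ : g m₀ ≠ 0) (hlt : ∀ i < m₀, g i = 0) :
    ∃ u : R, IsUnit u ∧ ∑ i, g i • P i = u * P m₀ := by
  have htail : ∑ i ∈ Finset.univ.erase m₀, g i • P i ∈ maximalIdeal R * span {P m₀} := by
    refine sum_mem fun i hi => ?_
    rcases lt_or_gt_of_ne (Finset.ne_of_mem_erase hi) with h | h
    · simp [hlt i h]
    · rw [Algebra.smul_def]
      exact mul_mem_left _ _ (mem_maximalIdeal_mul_span_singleton_of_lt hstep h i.isLt)
  obtain ⟨z, hz, hz_eq⟩ := mem_mul_span_singleton.1 htail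
  refine ⟨algebraMap k R (g m₀) + z, (hg₀.isUnit.map _).add_of_mem_maximalIdeal hz, ?_⟩
  rw [← Finset.add_sum_erase _ _ (Finset.mem_univ m₀), ← hz_eq, Algebra.smul_def, add_mul]

theorem linearIndependent_mk_of_mem_maximalIdeal_mul_span {M : ℕ} (I : Ideal R) (P : ℕ → R)
    (hstep : ∀ m, m + 1 < M → P (m + 1) ∈ maximalIdeal R * span {P m})
    (hnot : ∀ m, m < M → P m ∉ I) :
    LinearIndependent k (fun m : Fin M => Ideal.Quotient.mk I (P m)) := by
  classical
  rw [Fintype.linearIndependent_iff]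
  intro g hg
  by_contra! hne
  obtain ⟨m₀, hm₀⟩ := exists_minimal_of_wellFoundedLT (g · ≠ 0) hne
  have hmem : ∑ i, g i • P i ∈ I := by
    rw [← Ideal.Quotient.eq_zero_iff_mem, ← Ideal.Quotient.mkₐ_eq_mk k, map_sum]
    simpa only [map_smul, Ideal.Quotient.mkₐ_eq_mk] using hg
  obtain ⟨u, hu, hsum⟩ := exists_isUnit_sum_smul_eq_mul hstep g m₀ hm₀.prop
    (fun i hi => not_not.1 (hm₀.not_prop_of_lt hi))
  rw [hsum] at hmem
  exact hnot m₀ m₀.isLt ((Ideal.unit_mul_mem_iff_mem I hu).1 hmem)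

end

theorem stmt7_general (M : ℕ) (I : Ideal (MvPowerSeries (Fin 2) ℂ))
    (P : ℕ → MvPowerSeries (Fin 2) ℂ)
    (hstep : ∀ m, m + 1 < M →
      P (m + 1) = MvPowerSeries.X 0 * P m ∨ P (m + 1) = MvPowerSeries.X 1 * P m)
    (hnot : ∀ m, m < M → P m ∉ I) :
    LinearIndependent ℂ (fun m : Fin M => Ideal.Quotient.mk I (P m)) := by
  have hX (i : Fin 2) : (X i : MvPowerSeries (Fin 2) ℂ) ∈ maximalIdeal _ := by
    simp [mem_maximalIdeal, mem_nonunits_iff, isUnit_iff_constantCoeff]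
  refine linearIndependent_mk_of_mem_maximalIdeal_mul_span I P (fun m hm => ?_) hnot
  rcases hstep m hm with h | h <;> exact h ▸ mem_mul_span_singleton.2 ⟨_, hX _, rfl⟩

/-- In `R = ℂ⟦x,y⟧`, if `P_1 = 1`, each `P_{m+1}` is `x·P_m` or `y·P_m`, and no `P_m`
lies in the proper ideal `I`, then the images of `P_1, …, P_M` in `R/I` are linearly
independent over `ℂ`. -/
theorem stmt7 (M : ℕ) (I : Ideal (MvPowerSeries (Fin 2) ℂ)) (hI : I ≠ ⊤)
    (P : ℕ → MvPowerSeries (Fin 2) ℂ) (hP1 : P 0 = 1)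
    (hstep : ∀ m, m + 1 < M →
      P (m + 1) = MvPowerSeries.X 0 * P m ∨ P (m + 1) = MvPowerSeries.X 1 * P m)
    (hnot : ∀ m, m < M → P m ∉ I) :
    LinearIndependent ℂ (fun m : Fin M => Ideal.Quotient.mk I (P m)) :=
  stmt7_general M I P hstep hnot
end

section
/- Let R be a commutative ring, g_1, …, g_k ∈ R, and suppose there is an ideal J ⊆ R such that J ⊆ (g_i) + (g_j) for all i ≠ j. Then for any a_1, …, a_k ∈ J^{k−1} there exists F ∈ R such that F − a_i ∈ (g_i) for every i = 1, …, k. -/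
lemma ideal_prod_mono {R : Type*} [CommRing R] {ι : Type*} (s : Finset ι)
    {B C : ι → Ideal R} (h : ∀ j ∈ s, B j ≤ C j) :
    (∏ j ∈ s, B j) ≤ ∏ j ∈ s, C j := by
  classical
  induction s using Finset.induction_on with
  | empty => simp
  | insert _ _ hx ih =>
    rename_i x s
    rw [Finset.prod_insert hx, Finset.prod_insert hx]
    exact Ideal.mul_mono (h x (Finset.mem_insert_self x s))
      (ih fun j hj => h j (Finset.mem_insert_of_mem hj))

lemma prod_sup_le_sup_prod {R : Type*} [CommRing R] {ι : Type*} (s : Finset ι)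
    (A : Ideal R) (B : ι → Ideal R) :
    (∏ j ∈ s, (A ⊔ B j)) ≤ A ⊔ ∏ j ∈ s, B j := by
  classical
  induction s using Finset.induction_on with
  | empty => simp
  | insert _ _ hx ih =>
    rename_i x s
    rw [Finset.prod_insert hx, Finset.prod_insert hx]
    calc (A ⊔ B x) * ∏ j ∈ s, (A ⊔ B j) ≤ (A ⊔ B x) * (A ⊔ ∏ j ∈ s, B j) :=
          Ideal.mul_mono_right ih
      _ ≤ A ⊔ B x * ∏ j ∈ s, B j := by
          rw [Ideal.sup_mul, Ideal.mul_sup, Ideal.mul_sup]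
          refine sup_le (sup_le ?_ ?_) (sup_le ?_ le_sup_right) <;>
            [exact le_trans Ideal.mul_le_right le_sup_left;
             exact le_trans Ideal.mul_le_left le_sup_left;
             exact le_trans Ideal.mul_le_right le_sup_left]

/-- CRT-type gluing: if `J ⊆ (g_i, g_j)` for all `i ≠ j`, then any tuple of elements
`a_i ∈ J^{k−1}` can be interpolated by a single `F` with `F ≡ a_i mod (g_i)`. -/
theorem stmt8 (R : Type*) [CommRing R] (k : ℕ) (g : Fin k → R) (J : Ideal R)
    (hJ : ∀ i j : Fin k, i ≠ j → J ≤ Ideal.span {g i} ⊔ Ideal.span {g j})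
    (a : Fin k → R) (ha : ∀ i, a i ∈ J ^ (k - 1)) :
    ∃ F : R, ∀ i, F - a i ∈ Ideal.span {g i} := by
  classical
  rcases Nat.eq_zero_or_pos k with hk | hk
  · subst hk; exact ⟨0, fun i => i.elim0⟩
  set P : Fin k → Ideal R := fun i => ∏ j ∈ Finset.univ.erase i, Ideal.span {g j} with hP
  have key : ∀ i, J ^ (k - 1) ≤ Ideal.span {g i} ⊔ P i := by
    intro i
    have hcard : (Finset.univ.erase i).card = k - 1 := by
      simp [Finset.card_erase_of_mem]
    have h1 : J ^ (k - 1) = ∏ _j ∈ Finset.univ.erase i, J := by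
      rw [Finset.prod_const, hcard]
    rw [h1]
    calc (∏ _j ∈ Finset.univ.erase i, J)
        ≤ ∏ j ∈ Finset.univ.erase i, (Ideal.span {g i} ⊔ Ideal.span {g j}) := by
          refine ideal_prod_mono _ fun j hj => ?_
          exact hJ i j (Ne.symm (Finset.ne_of_mem_erase hj))
      _ ≤ Ideal.span {g i} ⊔ P i := prod_sup_le_sup_prod _ _ _
  -- decompose each a i
  have hdec : ∀ i, ∃ c ∈ Ideal.span {g i}, ∃ b ∈ P i, c + b = a i := by
    intro i
    exact Submodule.mem_sup.mp (key i (ha i))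
  choose c hc b hb hcb using hdec
  refine ⟨∑ j, b j, fun i => ?_⟩
  have hPle : ∀ j, j ≠ i → P j ≤ Ideal.span {g i} := by
    intro j hj
    have hi : i ∈ Finset.univ.erase j := Finset.mem_erase.mpr ⟨Ne.symm hj, Finset.mem_univ i⟩
    rw [hP]
    calc ∏ l ∈ Finset.univ.erase j, Ideal.span {g l}
        = Ideal.span {g i} * ∏ l ∈ (Finset.univ.erase j).erase i, Ideal.span {g l} :=
          (Finset.mul_prod_erase _ _ hi).symm
      _ ≤ Ideal.span {g i} := Ideal.mul_le_left
  have : (∑ j, b j) - a i = (∑ j ∈ Finset.univ.erase i, b j) - c i := by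
    rw [← hcb i, ← Finset.add_sum_erase _ _ (Finset.mem_univ i)]
    ring
  rw [this]
  refine sub_mem (Ideal.sum_mem _ fun j hj => ?_) (hc i)
  exact hPle j (Finset.ne_of_mem_erase hj) (hb j)
end
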